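/- Let L > 0, ε ∈ ℝ, M > 0, and let u : ℝ × ℝ² → ℝ be smooth (C^∞) with u(t,·) L-periodic for every t ∈ ℝ. Define μ : ℝ × ℝ² → ℝ by μ = u³ + (1−ε)u + 2Δₓu + Δₓ²u (spatial operators applied to u(t,·)), and suppose ∂ₜu(t,x) = M·(Δₓμ)(t,x) for all (t,x). Then for every t₀ ∈ ℝ, the function t ↦ E_PFC(u(t,·)) is differentiable at t₀ with derivative −M·∫_Ω |∇ₓμ(t₀,x)|² dx. -/

import Mathlib

open MeasureTheory

noncomputable section

/-- The box `Ω = [0,L]²` in `ℝ²` (modeled as `ℝ × ℝ`). -/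
def box (L : ℝ) : Set (ℝ × ℝ) := Set.Icc (0 : ℝ) L ×ˢ Set.Icc (0 : ℝ) L

/-- `f : ℝ² → ℝ` is `L`-periodic: periodic with period `L` in each coordinate direction. -/
def IsPeriodic (L : ℝ) (f : ℝ × ℝ → ℝ) : Prop :=
  ∀ x : ℝ × ℝ, f (x.1 + L, x.2) = f x ∧ f (x.1, x.2 + L) = f x

/-- First partial derivative `∂f/∂x₁`. -/
def pd1 (f : ℝ × ℝ → ℝ) (x : ℝ × ℝ) : ℝ := fderiv ℝ f x (1, 0)

/-- Second partial derivative `∂f/∂x₂`. -/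
def pd2 (f : ℝ × ℝ → ℝ) (x : ℝ × ℝ) : ℝ := fderiv ℝ f x (0, 1)

/-- The Laplacian `Δf = ∂²f/∂x₁² + ∂²f/∂x₂²`. -/
def lap (f : ℝ × ℝ → ℝ) (x : ℝ × ℝ) : ℝ := pd1 (pd1 f) x + pd2 (pd2 f) x

/-- The squared gradient `|∇f|² = (∂f/∂x₁)² + (∂f/∂x₂)²`. -/
def gradSq (f : ℝ × ℝ → ℝ) (x : ℝ × ℝ) : ℝ := (pd1 f x) ^ 2 + (pd2 f x) ^ 2

/-- The PFC free energy `E_PFC(u) = ∫_Ω [¼u⁴ + ((1−ε)/2)u² − |∇u|² + ½(Δu)²] dx`. -/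
def EPFC (L ε : ℝ) (u : ℝ × ℝ → ℝ) : ℝ :=
  ∫ x in box L, ((1/4) * u x ^ 4 + ((1 - ε)/2) * u x ^ 2 - gradSq u x + (1/2) * (lap u x) ^ 2)

-- ### smoothness of partial derivatives
abbrev Sm {E : Type*} [NormedAddCommGroup E] [NormedSpace ℝ E] (f : E → ℝ) : Prop :=
  ContDiff ℝ (⊤:ℕ∞) f

lemma Sm.pd1 {f : ℝ × ℝ → ℝ} (hf : Sm f) : Sm (pd1 f) :=
  (hf.fderiv_right (by simp)).clm_apply contDiff_const

lemma Sm.pd2 {f : ℝ × ℝ → ℝ} (hf : Sm f) : Sm (pd2 f) :=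
  (hf.fderiv_right (by simp)).clm_apply contDiff_const

lemma Sm.lap {f : ℝ × ℝ → ℝ} (hf : Sm f) : Sm (lap f) :=
  hf.pd1.pd1.add hf.pd2.pd2

lemma Sm.cont {E : Type*} [NormedAddCommGroup E] [NormedSpace ℝ E] {f : E → ℝ} (hf : Sm f) :
    Continuous f := hf.continuous

lemma Sm.diff {E : Type*} [NormedAddCommGroup E] [NormedSpace ℝ E] {f : E → ℝ} (hf : Sm f) :
    Differentiable ℝ f := hf.differentiable (by simp)

-- translation invariance of fderiv
lemma fderiv_translate {E : Type*} [NormedAddCommGroup E] [NormedSpace ℝ E]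
    {f : E → ℝ} (hf : Differentiable ℝ f) (w : E) (hw : ∀ p, f (p + w) = f p) (p : E) :
    fderiv ℝ f (p + w) = fderiv ℝ f p := by
  have h1 : HasFDerivAt (fun q => f (q + w)) (fderiv ℝ f (p + w)) p := by
    have := (hf (p + w)).hasFDerivAt.comp p ((hasFDerivAt_id p).add_const w)
    exact this
  rw [funext hw] at h1
  exact (h1.fderiv).symm

lemma isPeriodic_iff {L : ℝ} {f : ℝ × ℝ → ℝ} :
    IsPeriodic L f ↔ (∀ x, f (x + (L, 0)) = f x) ∧ (∀ x, f (x + (0, L)) = f x) := by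
  constructor
  · intro h
    refine ⟨fun x => ?_, fun x => ?_⟩
    · simpa [Prod.add_def] using (h x).1
    · simpa [Prod.add_def] using (h x).2
  · intro h x
    refine ⟨?_, ?_⟩
    · have := h.1 x; simpa [Prod.add_def] using this
    · have := h.2 x; simpa [Prod.add_def] using this

lemma IsPeriodic.pd1 {L : ℝ} {f : ℝ × ℝ → ℝ} (hf : Differentiable ℝ f)
    (hp : IsPeriodic L f) : IsPeriodic L (pd1 f) := by
  rw [isPeriodic_iff] at hp ⊢
  refine ⟨fun x => ?_, fun x => ?_⟩
  · simp [_root_.pd1, fderiv_translate hf _ hp.1 x]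
  · simp [_root_.pd1, fderiv_translate hf _ hp.2 x]

lemma IsPeriodic.pd2 {L : ℝ} {f : ℝ × ℝ → ℝ} (hf : Differentiable ℝ f)
    (hp : IsPeriodic L f) : IsPeriodic L (pd2 f) := by
  rw [isPeriodic_iff] at hp ⊢
  refine ⟨fun x => ?_, fun x => ?_⟩
  · simp [_root_.pd2, fderiv_translate hf _ hp.1 x]
  · simp [_root_.pd2, fderiv_translate hf _ hp.2 x]

lemma IsPeriodic.lap {L : ℝ} {f : ℝ × ℝ → ℝ} (hf : Sm f)
    (hp : IsPeriodic L f) : IsPeriodic L (lap f) := by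
  intro x
  have h1 := (hp.pd1 hf.diff).pd1 hf.pd1.diff
  have h2 := (hp.pd2 hf.diff).pd2 hf.pd2.diff
  exact ⟨by simp [_root_.lap, (h1 x).1, (h2 x).1], by simp [_root_.lap, (h1 x).2, (h2 x).2]⟩

lemma IsPeriodic.mul {L : ℝ} {f g : ℝ × ℝ → ℝ} (hf : IsPeriodic L f) (hg : IsPeriodic L g) :
    IsPeriodic L (fun x => f x * g x) := by
  intro x
  exact ⟨by simp [(hf x).1, (hg x).1], by simp [(hf x).2, (hg x).2]⟩

-- ### integrability
lemma integrableOn_box {L : ℝ} {f : ℝ × ℝ → ℝ} (hf : Continuous f) :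
    IntegrableOn f (box L) := hf.continuousOn.integrableOn_compact (isCompact_Icc.prod isCompact_Icc)

-- slice derivatives
lemma hasDerivAt_slice1 {f : ℝ × ℝ → ℝ} (hf : Differentiable ℝ f) (x₂ : ℝ) (s : ℝ) :
    HasDerivAt (fun s => f (s, x₂)) (pd1 f (s, x₂)) s := by
  have h := (hf (s, x₂)).hasFDerivAt.comp_hasDerivAt s
    ((hasDerivAt_id s).prodMk (hasDerivAt_const s x₂))
  simpa [pd1, Function.comp_def] using h

lemma hasDerivAt_slice2 {f : ℝ × ℝ → ℝ} (hf : Differentiable ℝ f) (x₁ : ℝ) (s : ℝ) :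
    HasDerivAt (fun s => f (x₁, s)) (pd2 f (x₁, s)) s := by
  have h := (hf (x₁, s)).hasFDerivAt.comp_hasDerivAt s
    ((hasDerivAt_const s x₁).prodMk (hasDerivAt_id s))
  simpa [pd2, Function.comp_def] using h

lemma integral_pd1_zero {L : ℝ} (hL : 0 < L) {f : ℝ × ℝ → ℝ} (hf : Sm f)
    (hp : IsPeriodic L f) : ∫ x in box L, pd1 f x = 0 := by
  have hcont : Continuous (pd1 f) := hf.pd1.cont
  have hint : IntegrableOn (pd1 f) (box L) := integrableOn_box hcont
  rw [box, Measure.volume_eq_prod] at hint ⊢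
  rw [MeasureTheory.setIntegral_prod _ hint]
  have hswap : ∫ x in Set.Icc (0:ℝ) L, ∫ y in Set.Icc (0:ℝ) L, pd1 f (x, y)
      = ∫ y in Set.Icc (0:ℝ) L, ∫ x in Set.Icc (0:ℝ) L, pd1 f (x, y) := by
    apply MeasureTheory.integral_integral_swap
    rw [Measure.prod_restrict]
    exact hint
  rw [hswap]
  have hinner : ∀ y : ℝ, ∫ x in Set.Icc (0:ℝ) L, pd1 f (x, y) = 0 := by
    intro y
    rw [MeasureTheory.integral_Icc_eq_integral_Ioc,
      ← intervalIntegral.integral_of_le hL.le]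
    rw [intervalIntegral.integral_eq_sub_of_hasDerivAt
      (fun s _ => hasDerivAt_slice1 hf.diff y s)
      ((hcont.comp (continuous_id.prodMk continuous_const)).intervalIntegrable 0 L)]
    have := (hp (0, y)).1
    simp only [zero_add] at this
    rw [this]
    ring
  simp [hinner]

lemma integral_pd2_zero {L : ℝ} (hL : 0 < L) {f : ℝ × ℝ → ℝ} (hf : Sm f)
    (hp : IsPeriodic L f) : ∫ x in box L, pd2 f x = 0 := by
  have hcont : Continuous (pd2 f) := hf.pd2.cont
  have hint : IntegrableOn (pd2 f) (box L) := integrableOn_box hcont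
  rw [box, Measure.volume_eq_prod] at hint ⊢
  rw [MeasureTheory.setIntegral_prod _ hint]
  have hinner : ∀ x : ℝ, ∫ y in Set.Icc (0:ℝ) L, pd2 f (x, y) = 0 := by
    intro x
    rw [MeasureTheory.integral_Icc_eq_integral_Ioc,
      ← intervalIntegral.integral_of_le hL.le]
    rw [intervalIntegral.integral_eq_sub_of_hasDerivAt
      (fun s _ => hasDerivAt_slice2 hf.diff x s)
      ((hcont.comp (continuous_const.prodMk continuous_id)).intervalIntegrable 0 L)]
    have := (hp (x, 0)).2
    simp only [zero_add] at this
    rw [this]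
    ring
  simp [hinner]

-- product rule for pd
lemma pd1_mul {f g : ℝ × ℝ → ℝ} (hf : Differentiable ℝ f) (hg : Differentiable ℝ g) (x : ℝ × ℝ) :
    pd1 (fun y => f y * g y) x = pd1 f x * g x + f x * pd1 g x := by
  simp only [pd1, fderiv_fun_mul (hf x) (hg x), ContinuousLinearMap.add_apply,
    ContinuousLinearMap.smul_apply, smul_eq_mul]
  ring

lemma pd2_mul {f g : ℝ × ℝ → ℝ} (hf : Differentiable ℝ f) (hg : Differentiable ℝ g) (x : ℝ × ℝ) :
    pd2 (fun y => f y * g y) x = pd2 f x * g x + f x * pd2 g x := by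
  simp only [pd2, fderiv_fun_mul (hf x) (hg x), ContinuousLinearMap.add_apply,
    ContinuousLinearMap.smul_apply, smul_eq_mul]
  ring

-- integration by parts
lemma parts1 {L : ℝ} (hL : 0 < L) {f g : ℝ × ℝ → ℝ} (hf : Sm f) (hg : Sm g)
    (hpf : IsPeriodic L f) (hpg : IsPeriodic L g) :
    ∫ x in box L, pd1 f x * g x = -∫ x in box L, f x * pd1 g x := by
  have h0 : ∫ x in box L, pd1 (fun y => f y * g y) x = 0 :=
    integral_pd1_zero hL (hf.mul hg) (hpf.mul hpg)
  have h1 : ∫ x in box L, (pd1 f x * g x + f x * pd1 g x) = 0 := by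
    rw [← h0]; exact setIntegral_congr_fun (measurableSet_Icc.prod measurableSet_Icc)
      (fun x _ => (pd1_mul hf.diff hg.diff x).symm)
  have hi1 : IntegrableOn (fun x => pd1 f x * g x) (box L) :=
    integrableOn_box (hf.pd1.cont.mul hg.cont)
  have hi2 : IntegrableOn (fun x => f x * pd1 g x) (box L) :=
    integrableOn_box (hf.cont.mul hg.pd1.cont)
  rw [MeasureTheory.integral_add hi1 hi2] at h1
  linarith

lemma parts2 {L : ℝ} (hL : 0 < L) {f g : ℝ × ℝ → ℝ} (hf : Sm f) (hg : Sm g)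
    (hpf : IsPeriodic L f) (hpg : IsPeriodic L g) :
    ∫ x in box L, pd2 f x * g x = -∫ x in box L, f x * pd2 g x := by
  have h0 : ∫ x in box L, pd2 (fun y => f y * g y) x = 0 :=
    integral_pd2_zero hL (hf.mul hg) (hpf.mul hpg)
  have h1 : ∫ x in box L, (pd2 f x * g x + f x * pd2 g x) = 0 := by
    rw [← h0]; exact setIntegral_congr_fun (measurableSet_Icc.prod measurableSet_Icc)
      (fun x _ => (pd2_mul hf.diff hg.diff x).symm)
  have hi1 : IntegrableOn (fun x => pd2 f x * g x) (box L) :=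
    integrableOn_box (hf.pd2.cont.mul hg.cont)
  have hi2 : IntegrableOn (fun x => f x * pd2 g x) (box L) :=
    integrableOn_box (hf.cont.mul hg.pd2.cont)
  rw [MeasureTheory.integral_add hi1 hi2] at h1
  linarith

-- second-order by parts: ∫ f · ∂ᵢ∂ᵢ g = ∫ ∂ᵢ∂ᵢ f · g
lemma parts11 {L : ℝ} (hL : 0 < L) {f g : ℝ × ℝ → ℝ} (hf : Sm f) (hg : Sm g)
    (hpf : IsPeriodic L f) (hpg : IsPeriodic L g) :
    ∫ x in box L, f x * pd1 (pd1 g) x = ∫ x in box L, pd1 (pd1 f) x * g x := by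
  have h1 := parts1 hL hf.pd1 hg (hpf.pd1 hf.diff) hpg
  have h2 := parts1 hL hf hg.pd1 hpf (hpg.pd1 hg.diff)
  have h1' : ∫ x in box L, pd1 (pd1 f) x * g x = -∫ x in box L, pd1 f x * pd1 g x := h1
  have h2' : ∫ x in box L, pd1 f x * pd1 g x = -∫ x in box L, f x * pd1 (pd1 g) x := h2
  linarith

lemma parts22 {L : ℝ} (hL : 0 < L) {f g : ℝ × ℝ → ℝ} (hf : Sm f) (hg : Sm g)
    (hpf : IsPeriodic L f) (hpg : IsPeriodic L g) :
    ∫ x in box L, f x * pd2 (pd2 g) x = ∫ x in box L, pd2 (pd2 f) x * g x := by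
  have h1' : ∫ x in box L, pd2 (pd2 f) x * g x = -∫ x in box L, pd2 f x * pd2 g x :=
    parts2 hL hf.pd2 hg (hpf.pd2 hf.diff) hpg
  have h2' : ∫ x in box L, pd2 f x * pd2 g x = -∫ x in box L, f x * pd2 (pd2 g) x :=
    parts2 hL hf hg.pd2 hpf (hpg.pd2 hg.diff)
  linarith

lemma boxMeas : ∀ L : ℝ, MeasurableSet (box L) :=
  fun _ => measurableSet_Icc.prod measurableSet_Icc

lemma parts_grad {L : ℝ} (hL : 0 < L) {f v : ℝ × ℝ → ℝ} (hf : Sm f) (hv : Sm v)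
    (hpf : IsPeriodic L f) (hpv : IsPeriodic L v) :
    ∫ x in box L, (pd1 f x * pd1 v x + pd2 f x * pd2 v x) = -∫ x in box L, lap f x * v x := by
  have e1 : ∫ x in box L, pd1 (pd1 f) x * v x = -∫ x in box L, pd1 f x * pd1 v x :=
    parts1 hL hf.pd1 hv (hpf.pd1 hf.diff) hpv
  have e2 : ∫ x in box L, pd2 (pd2 f) x * v x = -∫ x in box L, pd2 f x * pd2 v x :=
    parts2 hL hf.pd2 hv (hpf.pd2 hf.diff) hpv
  have i1 : IntegrableOn (fun x => pd1 f x * pd1 v x) (box L) :=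
    integrableOn_box (hf.pd1.cont.mul hv.pd1.cont)
  have i2 : IntegrableOn (fun x => pd2 f x * pd2 v x) (box L) :=
    integrableOn_box (hf.pd2.cont.mul hv.pd2.cont)
  have i3 : IntegrableOn (fun x => pd1 (pd1 f) x * v x) (box L) :=
    integrableOn_box (hf.pd1.pd1.cont.mul hv.cont)
  have i4 : IntegrableOn (fun x => pd2 (pd2 f) x * v x) (box L) :=
    integrableOn_box (hf.pd2.pd2.cont.mul hv.cont)
  have hsplit : ∫ x in box L, lap f x * v x
      = (∫ x in box L, pd1 (pd1 f) x * v x) + ∫ x in box L, pd2 (pd2 f) x * v x := by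
    rw [← MeasureTheory.integral_add i3 i4]
    exact setIntegral_congr_fun (boxMeas L) (fun x _ => by simp [lap, add_mul])
  rw [MeasureTheory.integral_add i1 i2, hsplit]
  linarith

lemma parts_laplap {L : ℝ} (hL : 0 < L) {f v : ℝ × ℝ → ℝ} (hf : Sm f) (hv : Sm v)
    (hpf : IsPeriodic L f) (hpv : IsPeriodic L v) :
    ∫ x in box L, lap f x * lap v x = ∫ x in box L, lap (lap f) x * v x := by
  have e1 : ∫ x in box L, lap f x * pd1 (pd1 v) x = ∫ x in box L, pd1 (pd1 (lap f)) x * v x :=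
    parts11 hL (hf.lap) hv (hpf.lap hf) hpv
  have e2 : ∫ x in box L, lap f x * pd2 (pd2 v) x = ∫ x in box L, pd2 (pd2 (lap f)) x * v x :=
    parts22 hL (hf.lap) hv (hpf.lap hf) hpv
  have i1 : IntegrableOn (fun x => lap f x * pd1 (pd1 v) x) (box L) :=
    integrableOn_box (hf.lap.cont.mul hv.pd1.pd1.cont)
  have i2 : IntegrableOn (fun x => lap f x * pd2 (pd2 v) x) (box L) :=
    integrableOn_box (hf.lap.cont.mul hv.pd2.pd2.cont)
  have i3 : IntegrableOn (fun x => pd1 (pd1 (lap f)) x * v x) (box L) :=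
    integrableOn_box (hf.lap.pd1.pd1.cont.mul hv.cont)
  have i4 : IntegrableOn (fun x => pd2 (pd2 (lap f)) x * v x) (box L) :=
    integrableOn_box (hf.lap.pd2.pd2.cont.mul hv.cont)
  have hs1 : ∫ x in box L, lap f x * lap v x
      = (∫ x in box L, lap f x * pd1 (pd1 v) x) + ∫ x in box L, lap f x * pd2 (pd2 v) x := by
    rw [← MeasureTheory.integral_add i1 i2]
    exact setIntegral_congr_fun (boxMeas L) (fun x _ => by simp [lap, mul_add])
  have hs2 : ∫ x in box L, lap (lap f) x * v x
      = (∫ x in box L, pd1 (pd1 (lap f)) x * v x) + ∫ x in box L, pd2 (pd2 (lap f)) x * v x := by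
    rw [← MeasureTheory.integral_add i3 i4]
    exact setIntegral_congr_fun (boxMeas L) (fun x _ => by simp [lap, add_mul])
  rw [hs1, hs2, e1, e2]

lemma integral_mul_lap_self {L : ℝ} (hL : 0 < L) {m : ℝ × ℝ → ℝ} (hm : Sm m)
    (hpm : IsPeriodic L m) :
    ∫ x in box L, m x * lap m x = -∫ x in box L, gradSq m x := by
  have h := parts_grad hL hm hm hpm hpm
  have hcomm : ∫ x in box L, lap m x * m x = ∫ x in box L, m x * lap m x :=
    setIntegral_congr_fun (boxMeas L) (fun x _ => mul_comm _ _)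
  have hgs : ∫ x in box L, gradSq m x
      = ∫ x in box L, (pd1 m x * pd1 m x + pd2 m x * pd2 m x) :=
    setIntegral_congr_fun (boxMeas L) (fun x _ => by simp [gradSq]; ring)
  rw [hgs]
  linarith

-- ### joint space ℝ × (ℝ × ℝ)
def D (v : ℝ × (ℝ × ℝ)) (f : ℝ × (ℝ × ℝ) → ℝ) (p : ℝ × (ℝ × ℝ)) : ℝ := fderiv ℝ f p v

def E1 : ℝ × (ℝ × ℝ) := (0, (1, 0))
def E2 : ℝ × (ℝ × ℝ) := (0, (0, 1))
def ET : ℝ × (ℝ × ℝ) := (1, (0, 0))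

def J (f : ℝ × (ℝ × ℝ) → ℝ) (p : ℝ × (ℝ × ℝ)) : ℝ := D E1 (D E1 f) p + D E2 (D E2 f) p

lemma Sm.D {f : ℝ × (ℝ × ℝ) → ℝ} (hf : Sm f) (v : ℝ × (ℝ × ℝ)) : Sm (D v f) :=
  (hf.fderiv_right (by simp)).clm_apply contDiff_const

lemma Sm.J {f : ℝ × (ℝ × ℝ) → ℝ} (hf : Sm f) : Sm (_root_.J f) :=
  ((hf.D E1).D E1).add ((hf.D E2).D E2)

lemma Sm.slice {f : ℝ × (ℝ × ℝ) → ℝ} (hf : Sm f) (t : ℝ) : Sm (fun y => f (t, y)) :=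
  hf.comp (contDiff_const.prodMk contDiff_id)

lemma pd1_slice {f : ℝ × (ℝ × ℝ) → ℝ} (hf : Differentiable ℝ f) (t : ℝ) (x : ℝ × ℝ) :
    pd1 (fun y => f (t, y)) x = D E1 f (t, x) := by
  have h : HasFDerivAt (fun y => f (t, y))
      ((fderiv ℝ f (t, x)).comp
        (((0 : (ℝ × ℝ) →L[ℝ] ℝ)).prod (ContinuousLinearMap.id ℝ (ℝ × ℝ)))) x :=
    (hf (t, x)).hasFDerivAt.comp x ((hasFDerivAt_const t x).prodMk (hasFDerivAt_id x))
  rw [pd1, h.fderiv]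
  simp [D, E1]

lemma pd2_slice {f : ℝ × (ℝ × ℝ) → ℝ} (hf : Differentiable ℝ f) (t : ℝ) (x : ℝ × ℝ) :
    pd2 (fun y => f (t, y)) x = D E2 f (t, x) := by
  have h : HasFDerivAt (fun y => f (t, y))
      ((fderiv ℝ f (t, x)).comp
        (((0 : (ℝ × ℝ) →L[ℝ] ℝ)).prod (ContinuousLinearMap.id ℝ (ℝ × ℝ)))) x :=
    (hf (t, x)).hasFDerivAt.comp x ((hasFDerivAt_const t x).prodMk (hasFDerivAt_id x))
  rw [pd2, h.fderiv]
  simp [D, E2]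

lemma pd1_pd1_slice {f : ℝ × (ℝ × ℝ) → ℝ} (hf : Sm f) (t : ℝ) (x : ℝ × ℝ) :
    pd1 (pd1 (fun y => f (t, y))) x = D E1 (D E1 f) (t, x) := by
  have h : pd1 (fun y => f (t, y)) = fun y => D E1 f (t, y) :=
    funext (fun y => pd1_slice hf.diff t y)
  rw [h]; exact pd1_slice (hf.D E1).diff t x

lemma pd2_pd2_slice {f : ℝ × (ℝ × ℝ) → ℝ} (hf : Sm f) (t : ℝ) (x : ℝ × ℝ) :
    pd2 (pd2 (fun y => f (t, y))) x = D E2 (D E2 f) (t, x) := by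
  have h : pd2 (fun y => f (t, y)) = fun y => D E2 f (t, y) :=
    funext (fun y => pd2_slice hf.diff t y)
  rw [h]; exact pd2_slice (hf.D E2).diff t x

lemma lap_slice {f : ℝ × (ℝ × ℝ) → ℝ} (hf : Sm f) (t : ℝ) (x : ℝ × ℝ) :
    lap (fun y => f (t, y)) x = J f (t, x) := by
  rw [lap, J, pd1_pd1_slice hf t x, pd2_pd2_slice hf t x]

lemma laplap_slice {f : ℝ × (ℝ × ℝ) → ℝ} (hf : Sm f) (t : ℝ) (x : ℝ × ℝ) :
    lap (lap (fun y => f (t, y))) x = J (J f) (t, x) := by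
  have h : lap (fun y => f (t, y)) = fun y => J f (t, y) :=
    funext (fun y => lap_slice hf t y)
  rw [h]; exact lap_slice hf.J t x

lemma gradSq_slice {f : ℝ × (ℝ × ℝ) → ℝ} (hf : Sm f) (t : ℝ) (x : ℝ × ℝ) :
    gradSq (fun y => f (t, y)) x = (D E1 f (t, x)) ^ 2 + (D E2 f (t, x)) ^ 2 := by
  rw [gradSq, pd1_slice hf.diff t x, pd2_slice hf.diff t x]

lemma hasDerivAt_timeslice {f : ℝ × (ℝ × ℝ) → ℝ} (hf : Differentiable ℝ f)
    (x : ℝ × ℝ) (t : ℝ) : HasDerivAt (fun s => f (s, x)) (D ET f (t, x)) t := by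
  have h := (hf (t, x)).hasFDerivAt.comp_hasDerivAt t
    ((hasDerivAt_id t).prodMk (hasDerivAt_const t x))
  simpa [D, ET, Function.comp_def, Prod.mk_zero_zero] using h

-- Schwarz symmetry
lemma D_comm {f : ℝ × (ℝ × ℝ) → ℝ} (hf : Sm f) (v w : ℝ × (ℝ × ℝ)) (p : ℝ × (ℝ × ℝ)) :
    D v (D w f) p = D w (D v f) p := by
  have hdf : ∀ q, HasFDerivAt f (fderiv ℝ f q) q := fun q => (hf.diff q).hasFDerivAt
  have hC : ContDiff ℝ (⊤:ℕ∞) (fderiv ℝ f) := hf.fderiv_right (by simp)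
  have hdd : DifferentiableAt ℝ (fderiv ℝ f) p := (hC.differentiable (by simp)) p
  have hsym := second_derivative_symmetric hdf hdd.hasFDerivAt v w
  have h1 : ∀ z : ℝ × (ℝ × ℝ), fderiv ℝ (fun q => fderiv ℝ f q z) p
      = (fderiv ℝ (fderiv ℝ f) p).flip z := by
    intro z
    rw [fderiv_clm_apply hdd (differentiableAt_const z)]
    simp
  have e : ∀ z, _root_.D z f = fun q => fderiv ℝ f q z := fun z => rfl
  simp only [D, e, h1, ContinuousLinearMap.flip_apply]
  exact hsym

-- joint periodicity
def PerJ (L : ℝ) (f : ℝ × (ℝ × ℝ) → ℝ) : Prop :=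
  ∀ p, f (p + (0, (L, 0))) = f p ∧ f (p + (0, (0, L))) = f p

lemma PerJ.D {L : ℝ} {f : ℝ × (ℝ × ℝ) → ℝ} (hf : Differentiable ℝ f) (hp : PerJ L f)
    (v : ℝ × (ℝ × ℝ)) : PerJ L (_root_.D v f) := by
  intro p
  constructor
  · simp [_root_.D, fderiv_translate hf _ (fun q => (hp q).1) p]
  · simp [_root_.D, fderiv_translate hf _ (fun q => (hp q).2) p]

lemma PerJ.J {L : ℝ} {f : ℝ × (ℝ × ℝ) → ℝ} (hf : Sm f) (hp : PerJ L f) :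
    PerJ L (_root_.J f) := by
  intro p
  have h1 := (hp.D hf.diff E1).D (hf.D E1).diff E1
  have h2 := (hp.D hf.diff E2).D (hf.D E2).diff E2
  exact ⟨by simp [_root_.J, (h1 p).1, (h2 p).1], by simp [_root_.J, (h1 p).2, (h2 p).2]⟩

lemma PerJ.slice {L : ℝ} {f : ℝ × (ℝ × ℝ) → ℝ} (hp : PerJ L f) (t : ℝ) :
    IsPeriodic L (fun x => f (t, x)) := by
  intro x
  have h := hp (t, x)
  constructor
  · have := h.1; simpa [Prod.add_def] using this
  · have := h.2; simpa [Prod.add_def] using this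

lemma perJ_of_periodic {L : ℝ} {f : ℝ × (ℝ × ℝ) → ℝ}
    (h : ∀ t : ℝ, IsPeriodic L (fun x => f (t, x))) : PerJ L f := by
  intro p
  constructor
  · have := (h p.1 p.2).1; simpa [Prod.add_def] using this
  · have := (h p.1 p.2).2; simpa [Prod.add_def] using this

-- ### the integrand and its time derivative, as functions on the joint space
def integrandJ (ε : ℝ) (u : ℝ × (ℝ × ℝ) → ℝ) (p : ℝ × (ℝ × ℝ)) : ℝ :=
  (1/4) * u p ^ 4 + ((1 - ε)/2) * u p ^ 2 - ((D E1 u p) ^ 2 + (D E2 u p) ^ 2)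
    + (1/2) * (J u p) ^ 2

def integrandJ' (ε : ℝ) (u : ℝ × (ℝ × ℝ) → ℝ) (p : ℝ × (ℝ × ℝ)) : ℝ :=
  u p ^ 3 * D ET u p + (1 - ε) * (u p * D ET u p)
    - (2 * (D E1 u p * D E1 (D ET u) p) + 2 * (D E2 u p * D E2 (D ET u) p))
    + J u p * J (D ET u) p

def muJ (ε : ℝ) (u : ℝ × (ℝ × ℝ) → ℝ) (p : ℝ × (ℝ × ℝ)) : ℝ :=
  u p ^ 3 + (1 - ε) * u p + 2 * J u p + J (J u) p

lemma Sm.integrandJ {u : ℝ × (ℝ × ℝ) → ℝ} (hu : Sm u) (ε : ℝ) : Sm (integrandJ ε u) :=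
  (((contDiff_const.mul (hu.pow 4)).add (contDiff_const.mul (hu.pow 2))).sub
    (((hu.D E1).pow 2).add ((hu.D E2).pow 2))).add (contDiff_const.mul (hu.J.pow 2))

lemma Sm.integrandJ' {u : ℝ × (ℝ × ℝ) → ℝ} (hu : Sm u) (ε : ℝ) : Sm (integrandJ' ε u) :=
  ((((hu.pow 3).mul (hu.D ET)).add (contDiff_const.mul (hu.mul (hu.D ET)))).sub
    ((contDiff_const.mul ((hu.D E1).mul ((hu.D ET).D E1))).add
      (contDiff_const.mul ((hu.D E2).mul ((hu.D ET).D E2))))).add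
    (hu.J.mul (hu.D ET).J)

lemma Sm.muJ {u : ℝ × (ℝ × ℝ) → ℝ} (hu : Sm u) (ε : ℝ) : Sm (muJ ε u) :=
  (((hu.pow 3).add (contDiff_const.mul hu)).add (contDiff_const.mul hu.J)).add hu.J.J

lemma PerJ.muJ {L ε : ℝ} {u : ℝ × (ℝ × ℝ) → ℝ} (hu : Sm u) (hp : PerJ L u) :
    PerJ L (muJ ε u) := by
  intro p
  have h0 := hp p
  have h1 := (hp.J hu) p
  have h2 := ((hp.J hu).J hu.J) p
  constructor
  · simp only [_root_.muJ]
    rw [h0.1, h1.1, h2.1]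
  · simp only [_root_.muJ]
    rw [h0.2, h1.2, h2.2]

-- commuting time and space derivatives
lemma D_ET_J {u : ℝ × (ℝ × ℝ) → ℝ} (hu : Sm u) (p : ℝ × (ℝ × ℝ)) :
    D ET (J u) p = J (D ET u) p := by
  have hadd : D ET (J u) p = D ET (D E1 (D E1 u)) p + D ET (D E2 (D E2 u)) p := by
    have : J u = fun q => D E1 (D E1 u) q + D E2 (D E2 u) q := rfl
    rw [_root_.D, this, fderiv_fun_add (((hu.D E1).D E1).diff p) (((hu.D E2).D E2).diff p)]
    rfl
  have h1 : D ET (D E1 (D E1 u)) p = D E1 (D E1 (D ET u)) p := by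
    rw [D_comm (hu.D E1) ET E1 p]
    have : D ET (D E1 u) = D E1 (D ET u) := funext (fun q => D_comm hu ET E1 q)
    rw [this]
  have h2 : D ET (D E2 (D E2 u)) p = D E2 (D E2 (D ET u)) p := by
    rw [D_comm (hu.D E2) ET E2 p]
    have : D ET (D E2 u) = D E2 (D ET u) := funext (fun q => D_comm hu ET E2 q)
    rw [this]
  rw [hadd, h1, h2]; rfl

lemma integrandJ_hasDerivAt {u : ℝ × (ℝ × ℝ) → ℝ} (hu : Sm u) (ε : ℝ)
    (x : ℝ × ℝ) (t : ℝ) :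
    HasDerivAt (fun s => integrandJ ε u (s, x)) (integrandJ' ε u (t, x)) t := by
  have h0 : HasDerivAt (fun s => u (s, x)) (D ET u (t, x)) t :=
    hasDerivAt_timeslice hu.diff x t
  have h1 : HasDerivAt (fun s => D E1 u (s, x)) (D E1 (D ET u) (t, x)) t := by
    have h := hasDerivAt_timeslice (hu.D E1).diff x t
    rwa [D_comm hu ET E1 (t, x)] at h
  have h2 : HasDerivAt (fun s => D E2 u (s, x)) (D E2 (D ET u) (t, x)) t := by
    have h := hasDerivAt_timeslice (hu.D E2).diff x t
    rwa [D_comm hu ET E2 (t, x)] at h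
  have h3 : HasDerivAt (fun s => J u (s, x)) (J (D ET u) (t, x)) t := by
    have h := hasDerivAt_timeslice hu.J.diff x t
    rwa [D_ET_J hu (t, x)] at h
  have hfull := ((((h0.pow 4).const_mul ((1:ℝ)/4)).add
      ((h0.pow 2).const_mul ((1 - ε)/2))).sub
      ((h1.pow 2).add (h2.pow 2))).add ((h3.pow 2).const_mul ((1:ℝ)/2))
  refine HasDerivAt.congr_deriv hfull ?_
  simp only [integrandJ']
  push_cast
  ring


/-- Energy dissipation for the PFC equation: if `∂ₜ u = M Δₓ μ` with
`μ = u³ + (1−ε)u + 2Δₓu + Δₓ²u`, then `t ↦ E_PFC(u(t,·))` is differentiable with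
derivative `−M ∫_Ω |∇ₓμ(t₀,x)|² dx` at each `t₀`. -/
theorem EPFC_dissipation
    (L : ℝ) (hL : 0 < L) (ε M : ℝ) (hM : 0 < M)
    (u : ℝ × (ℝ × ℝ) → ℝ) (hu : ContDiff ℝ (⊤ : ℕ∞) u)
    (hup : ∀ t : ℝ, IsPeriodic L (fun x => u (t, x)))
    (μ : ℝ × (ℝ × ℝ) → ℝ)
    (hμ : ∀ (t : ℝ) (x : ℝ × ℝ),
      μ (t, x) = u (t, x) ^ 3 + (1 - ε) * u (t, x)
        + 2 * lap (fun y => u (t, y)) x + lap (lap (fun y => u (t, y))) x)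
    (heq : ∀ (t : ℝ) (x : ℝ × ℝ),
      deriv (fun s => u (s, x)) t = M * lap (fun y => μ (t, y)) x) :
    ∀ t₀ : ℝ, HasDerivAt (fun t => EPFC L ε (fun x => u (t, x)))
      (-M * ∫ x in box L, gradSq (fun y => μ (t₀, y)) x) t₀ := by
  have hu' : Sm u := hu.of_le (by simp)
  have hperJ : PerJ L u := perJ_of_periodic hup
  have hμe : μ = muJ ε u := by
    funext p
    have h := hμ p.1 p.2
    rw [lap_slice hu' p.1 p.2, laplap_slice hu' p.1 p.2] at h
    simpa [muJ] using h
  subst hμe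
  intro t₀
  have hE : ∀ t : ℝ, EPFC L ε (fun x => u (t, x)) = ∫ x in box L, integrandJ ε u (t, x) := by
    intro t
    rw [EPFC]
    apply setIntegral_congr_fun (boxMeas L)
    intro x _
    dsimp only
    rw [gradSq_slice hu' t x, lap_slice hu' t x]
    simp [integrandJ]
  have hG'sm : Sm (integrandJ' ε u) := hu'.integrandJ' ε
  obtain ⟨C, hC⟩ := (isCompact_Icc.prod (isCompact_Icc.prod isCompact_Icc)
    : IsCompact ((Set.Icc (t₀-1) (t₀+1)) ×ˢ box L)).exists_bound_of_continuousOn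
    hG'sm.cont.continuousOn
  have key : HasDerivAt (fun t => ∫ x in box L, integrandJ ε u (t, x))
      (∫ x in box L, integrandJ' ε u (t₀, x)) t₀ := by
    have h := hasDerivAt_integral_of_dominated_loc_of_deriv_le
      (μ := volume.restrict (box L)) (x₀ := t₀)
      (F := fun t x => integrandJ ε u (t, x)) (F' := fun t x => integrandJ' ε u (t, x))
      (bound := fun _ => C) (s := Metric.ball t₀ 1) (Metric.ball_mem_nhds t₀ one_pos)
      (Filter.Eventually.of_forall (fun t =>
        (((hu'.integrandJ ε).cont.comp (Continuous.prodMk_right t)).aestronglyMeasurable)))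
      (integrableOn_box ((hu'.integrandJ ε).cont.comp (Continuous.prodMk_right t₀)))
      ((hG'sm.cont.comp (Continuous.prodMk_right t₀)).aestronglyMeasurable)
      ?_ ?_ ?_
    · exact h.2
    · apply ae_restrict_of_forall_mem (boxMeas L)
      intro x hx t ht
      apply hC (t, x)
      refine ⟨?_, hx⟩
      have h1 := Metric.mem_ball.mp ht
      rw [Real.dist_eq] at h1
      have h2 := abs_lt.mp h1
      exact ⟨by linarith [h2.1], by linarith [h2.2]⟩
    · exact MeasureTheory.integrableOn_const
        ((isCompact_Icc.prod isCompact_Icc).measure_lt_top.ne)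
    · apply ae_restrict_of_forall_mem (boxMeas L)
      intro x _ t _
      exact integrandJ_hasDerivAt hu' ε x t
  -- slice functions at t₀
  set f : ℝ × ℝ → ℝ := fun x => u (t₀, x) with hfdef
  set w : ℝ × ℝ → ℝ := fun x => D ET u (t₀, x) with hwdef
  set m : ℝ × ℝ → ℝ := fun x => muJ ε u (t₀, x) with hmdef
  have hfsm : Sm f := hu'.slice t₀
  have hwsm : Sm w := (hu'.D ET).slice t₀
  have hmsm : Sm m := (hu'.muJ ε).slice t₀
  have hfper : IsPeriodic L f := hup t₀
  have hwper : IsPeriodic L w := (hperJ.D hu'.diff ET).slice t₀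
  have hmper : IsPeriodic L m := (hperJ.muJ hu').slice t₀
  have hpt : ∀ x : ℝ × ℝ, integrandJ' ε u (t₀, x) =
      (f x ^ 3 + (1 - ε) * f x) * w x
        - 2 * (pd1 f x * pd1 w x + pd2 f x * pd2 w x) + lap f x * lap w x := by
    intro x
    rw [integrandJ']
    rw [← pd1_slice hu'.diff t₀ x, ← pd2_slice hu'.diff t₀ x,
      ← pd1_slice (hu'.D ET).diff t₀ x, ← pd2_slice (hu'.D ET).diff t₀ x,
      ← lap_slice hu' t₀ x, ← lap_slice (hu'.D ET) t₀ x]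
    ring
  -- integrability of the pieces
  have hiA : IntegrableOn (fun x => (f x ^ 3 + (1 - ε) * f x) * w x) (box L) :=
    integrableOn_box (((hfsm.cont.pow 3).add (continuous_const.mul hfsm.cont)).mul hwsm.cont)
  have hiB1 : IntegrableOn (fun x => pd1 f x * pd1 w x + pd2 f x * pd2 w x) (box L) :=
    integrableOn_box ((hfsm.pd1.cont.mul hwsm.pd1.cont).add (hfsm.pd2.cont.mul hwsm.pd2.cont))
  have hiB2 : IntegrableOn (fun x => lap f x * lap w x) (box L) :=
    integrableOn_box (hfsm.lap.cont.mul hwsm.lap.cont)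
  have hiC1 : IntegrableOn (fun x => lap f x * w x) (box L) :=
    integrableOn_box (hfsm.lap.cont.mul hwsm.cont)
  have hiC2 : IntegrableOn (fun x => lap (lap f) x * w x) (box L) :=
    integrableOn_box (hfsm.lap.lap.cont.mul hwsm.cont)
  have hval : ∫ x in box L, integrandJ' ε u (t₀, x)
      = -M * ∫ x in box L, gradSq m x := by
    have e0 : ∫ x in box L, integrandJ' ε u (t₀, x)
        = ∫ x in box L, ((f x ^ 3 + (1 - ε) * f x) * w x
            - 2 * (pd1 f x * pd1 w x + pd2 f x * pd2 w x) + lap f x * lap w x) :=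
      setIntegral_congr_fun (boxMeas L) (fun x _ => hpt x)
    have e1 : ∫ x in box L, ((f x ^ 3 + (1 - ε) * f x) * w x
          - 2 * (pd1 f x * pd1 w x + pd2 f x * pd2 w x) + lap f x * lap w x)
        = (∫ x in box L, (f x ^ 3 + (1 - ε) * f x) * w x)
          - 2 * (∫ x in box L, (pd1 f x * pd1 w x + pd2 f x * pd2 w x))
          + ∫ x in box L, lap f x * lap w x := by
      have h1 : IntegrableOn (fun x => (f x ^ 3 + (1 - ε) * f x) * w x
          - 2 * (pd1 f x * pd1 w x + pd2 f x * pd2 w x)) (box L) :=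
        hiA.sub (hiB1.const_mul 2)
      rw [MeasureTheory.integral_add h1 hiB2,
        MeasureTheory.integral_sub hiA (hiB1.const_mul 2),
        MeasureTheory.integral_const_mul]
    have e2 : ∫ x in box L, (pd1 f x * pd1 w x + pd2 f x * pd2 w x)
        = -∫ x in box L, lap f x * w x := parts_grad hL hfsm hwsm hfper hwper
    have e3 : ∫ x in box L, lap f x * lap w x
        = ∫ x in box L, lap (lap f) x * w x := parts_laplap hL hfsm hwsm hfper hwper
    have e4a : ∫ x in box L, m x * w x
        = ∫ x in box L, ((f x ^ 3 + (1 - ε) * f x) * w x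
            + 2 * (lap f x * w x) + lap (lap f) x * w x) := by
      apply setIntegral_congr_fun (boxMeas L)
      intro x _
      dsimp only
      have hmx : m x = f x ^ 3 + (1 - ε) * f x + 2 * lap f x + lap (lap f) x := by
        have h := hμ t₀ x
        simpa [hmdef, hfdef] using h
      rw [hmx]; ring
    have e4b : ∫ x in box L, ((f x ^ 3 + (1 - ε) * f x) * w x
            + 2 * (lap f x * w x) + lap (lap f) x * w x)
        = (∫ x in box L, (f x ^ 3 + (1 - ε) * f x) * w x)
          + 2 * (∫ x in box L, lap f x * w x)
          + ∫ x in box L, lap (lap f) x * w x := by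
      have h1 : IntegrableOn (fun x => (f x ^ 3 + (1 - ε) * f x) * w x
          + 2 * (lap f x * w x)) (box L) := hiA.add (hiC1.const_mul 2)
      rw [MeasureTheory.integral_add h1 hiC2,
        MeasureTheory.integral_add hiA (hiC1.const_mul 2),
        MeasureTheory.integral_const_mul]
    have e5 : ∫ x in box L, m x * w x = M * ∫ x in box L, m x * lap m x := by
      have e5a : ∫ x in box L, m x * w x = ∫ x in box L, M * (m x * lap m x) := by
        apply setIntegral_congr_fun (boxMeas L)
        intro x _
        dsimp only
        have hw : w x = M * lap m x := by
          have h1 := heq t₀ x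
          have h2 := (hasDerivAt_timeslice hu'.diff x t₀).deriv
          rw [h2] at h1
          simpa [hwdef, hmdef] using h1
        rw [hw]; ring
      rw [e5a, MeasureTheory.integral_const_mul]
    have e6 : ∫ x in box L, m x * lap m x = -∫ x in box L, gradSq m x :=
      integral_mul_lap_self hL hmsm hmper
    have e7 : (∫ x in box L, (f x ^ 3 + (1 - ε) * f x) * w x)
        - 2 * (-∫ x in box L, lap f x * w x) + ∫ x in box L, lap (lap f) x * w x
        = ∫ x in box L, m x * w x := by rw [e4a, e4b]; ring
    rw [e0, e1, e2, e3, e7, e5, e6]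
    ring
  have hfun : (fun t => EPFC L ε (fun x => u (t, x)))
      = fun t => ∫ x in box L, integrandJ ε u (t, x) := funext hE
  rw [hfun, show (-M * ∫ x in box L, gradSq (fun y => muJ ε u (t₀, y)) x)
    = ∫ x in box L, integrandJ' ε u (t₀, x) from hval.symm]
  exact key
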